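/- Let a ∈ ℝ^p with ‖a‖₁ ≤ M·S for some real M > 0 and integer 1 ≤ S ≤ p. Then the tail of the squared decreasing rearrangement satisfies ∑_{j=S+1}^{p} a_(j)² ≤ M² S, and more precisely ∑_{j=S+1}^{p} a_(j)² ≤ (M S)² · ∑_{j=S+1}^{p} 1/j² ≤ M² S. -/
import Mathlib


open Finset

private lemma tele (S : ℕ) (hS1 : 1 ≤ S) : ∀ p, S ≤ p →
    ∑ j ∈ Finset.Ico S p, (1 : ℝ) / ((j : ℕ) + 1) ^ 2 ≤ 1 / S - 1 / (p:ℝ) := by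
  intro p hp
  induction p, hp using Nat.le_induction with
  | base => simp
  | succ n hn ih =>
    rw [Finset.sum_Ico_succ_top hn]
    have hn0 : (0:ℝ) < n := by exact_mod_cast lt_of_lt_of_le hS1 hn
    have key : (1:ℝ) / ((n:ℝ) + 1) ^ 2 ≤ 1 / n - 1 / (n + 1) := by
      rw [div_sub_div _ _ (ne_of_gt hn0) (by positivity)]
      rw [div_le_div_iff₀ (by positivity) (by positivity)]
      ring_nf
      nlinarith [sq_nonneg ((n:ℝ)+1)]
    have := add_le_add ih key
    push_cast
    linarith

/-- If `‖a‖₁ ≤ M·S`, then the tail of the squared decreasing rearrangement after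
rank `S` is at most `(M S)² ∑_{j>S} 1/j² ≤ M² S`. -/
theorem stmt3 {p : ℕ} (a : Fin p → ℝ) (M : ℝ) (S : ℕ)
    (hM : 0 < M) (hS1 : 1 ≤ S) (hSp : S ≤ p)
    (σ : Equiv.Perm (Fin p))
    (hσ : ∀ i j : Fin p, i ≤ j → |a (σ j)| ≤ |a (σ i)|)
    (hK : ∑ j, |a j| ≤ M * S) :
    (∑ j ∈ Finset.univ.filter (fun j : Fin p => S ≤ (j : ℕ)), (a (σ j)) ^ 2
        ≤ (M * S) ^ 2 *
          ∑ j ∈ Finset.univ.filter (fun j : Fin p => S ≤ (j : ℕ)),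
            (1 : ℝ) / ((j : ℕ) + 1) ^ 2) ∧
    ((M * S) ^ 2 *
        ∑ j ∈ Finset.univ.filter (fun j : Fin p => S ≤ (j : ℕ)),
          (1 : ℝ) / ((j : ℕ) + 1) ^ 2 ≤ M ^ 2 * S) ∧
    ∑ j ∈ Finset.univ.filter (fun j : Fin p => S ≤ (j : ℕ)), (a (σ j)) ^ 2
        ≤ M ^ 2 * S := by
  have hMS : (0:ℝ) < M * S := by
    have : (0:ℝ) < S := by exact_mod_cast hS1
    positivity
  -- pointwise bound
  have hpt : ∀ j : Fin p, ((j:ℕ) + 1 : ℝ) * |a (σ j)| ≤ M * S := by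
    intro j
    have hcard : (Finset.Iic j).card = (j:ℕ) + 1 := by
      simp [Fin.card_Iic]
    have h1 : (Finset.Iic j).card • |a (σ j)| ≤ ∑ i ∈ Finset.Iic j, |a (σ i)| :=
      Finset.card_nsmul_le_sum _ _ _ (fun i hi => hσ i j (Finset.mem_Iic.mp hi))
    have h2 : ∑ i ∈ Finset.Iic j, |a (σ i)| ≤ ∑ i, |a (σ i)| :=
      Finset.sum_le_sum_of_subset_of_nonneg (Finset.subset_univ _)
        (fun i _ _ => abs_nonneg _)
    have h3 : ∑ i, |a (σ i)| = ∑ i, |a i| := Equiv.sum_comp σ (fun i => |a i|)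
    calc ((j:ℕ) + 1 : ℝ) * |a (σ j)| = (Finset.Iic j).card • |a (σ j)| := by
          rw [hcard]; push_cast [nsmul_eq_mul]; ring
      _ ≤ M * S := by linarith
  have hsq : ∀ j ∈ Finset.univ.filter (fun j : Fin p => S ≤ (j : ℕ)),
      (a (σ j)) ^ 2 ≤ (M * S) ^ 2 * ((1:ℝ) / ((j:ℕ) + 1) ^ 2) := by
    intro j _
    have hj1 : (0:ℝ) < (j:ℕ) + 1 := by positivity
    have h := hpt j
    have habs : |a (σ j)| ≤ M * S / ((j:ℕ) + 1) := by
      rw [le_div_iff₀ hj1]; linarith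
    have : (a (σ j)) ^ 2 ≤ (M * S / ((j:ℕ) + 1)) ^ 2 := by
      rw [← sq_abs]
      exact pow_le_pow_left₀ (abs_nonneg _) habs 2
    calc (a (σ j)) ^ 2 ≤ (M * S / ((j:ℕ) + 1)) ^ 2 := this
      _ = (M * S) ^ 2 * ((1:ℝ) / ((j:ℕ) + 1) ^ 2) := by
          field_simp
  have part1 : ∑ j ∈ Finset.univ.filter (fun j : Fin p => S ≤ (j : ℕ)), (a (σ j)) ^ 2
      ≤ (M * S) ^ 2 * ∑ j ∈ Finset.univ.filter (fun j : Fin p => S ≤ (j : ℕ)),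
          (1 : ℝ) / ((j : ℕ) + 1) ^ 2 := by
    rw [Finset.mul_sum]
    exact Finset.sum_le_sum hsq
  have hre : ∑ j ∈ Finset.univ.filter (fun j : Fin p => S ≤ (j : ℕ)),
      (1 : ℝ) / ((j : ℕ) + 1) ^ 2 = ∑ j ∈ Finset.Ico S p, (1:ℝ) / ((j:ℕ) + 1) ^ 2 := by
    rw [Finset.sum_filter,
      Fin.sum_univ_eq_sum_range (fun j => if S ≤ j then (1:ℝ) / ((j:ℕ) + 1) ^ 2 else 0),
      ← Finset.sum_filter]
    congr 1
    ext x
    simp [Finset.mem_Ico, and_comm]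
  have part2 : (M * S) ^ 2 * ∑ j ∈ Finset.univ.filter (fun j : Fin p => S ≤ (j : ℕ)),
      (1 : ℝ) / ((j : ℕ) + 1) ^ 2 ≤ M ^ 2 * S := by
    rw [hre]
    have h1 := tele S hS1 p hSp
    have hS0 : (0:ℝ) < S := by exact_mod_cast hS1
    have hp0 : (0:ℝ) < p := by exact_mod_cast lt_of_lt_of_le hS1 hSp
    have h2 : ∑ j ∈ Finset.Ico S p, (1:ℝ) / ((j:ℕ) + 1) ^ 2 ≤ 1 / (S:ℝ) := by
      have : (0:ℝ) ≤ 1 / p := by positivity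
      linarith
    calc (M * S) ^ 2 * ∑ j ∈ Finset.Ico S p, (1:ℝ) / ((j:ℕ) + 1) ^ 2
        ≤ (M * S) ^ 2 * (1 / S) := by
          exact mul_le_mul_of_nonneg_left h2 (by positivity)
      _ = M ^ 2 * S := by field_simp
  exact ⟨part1, part2, le_trans part1 part2⟩
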